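/- Theorem (Upper bound of the expected hidden embeddings' difference): Let Z = P H W be the exact hidden embedding where P is the propagation matrix built from edge set E, and let Z̃ = P̃ H W be the embedding built by sampling |E_s| edges i.i.d., each edge (v,u) with probability p_{(v,u)}, with the importance-weighted propagation matrix (P̃)_{v,u} = P_{v,u}/(|E_s| p_{(v,u)}) on sampled edges and 0 otherwise. Assume ‖H_{u,*} W‖₂ ≤ ξ for every node u. Then E[‖Z̃ − Z‖_F²] ≤ (1/|E_s|) ∑_{(v,u)∈E} ‖P_{*,u}‖₂² ξ² / p_{(v,u)}. -/

import Mathlib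

/-! Summing against the weights `∏ i, q (ω i)` is taking the expectation over `s` i.i.d. draws
from `q`. A draw `e` contributes the matrix `X e = edgePropagation P p e * H * W`; since `P` is
supported on `E`, the `p`-mean of `X` is `Z = P H W`, while `Z̃` is the average of the `s` draws.
So `E‖Z̃ - Z‖_F²` is the variance of a sample mean, which independence reduces entrywise to
`(E X² - (E X)²) / s ≤ E X² / s`. Finally `p e * ‖X e‖_F² = P_e² ‖(H W)_{u,*}‖₂² / p e`, which is at
most `‖P_{*,u}‖₂² ξ² / p e` for `e = (v, u)`. -/

open Finset

/-- Squared Frobenius norm of a real matrix. -/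
noncomputable def frobSq {m n : Type*} [Fintype m] [Fintype n]
    (M : Matrix m n ℝ) : ℝ := ∑ i, ∑ j, (M i j) ^ 2

section IndependentSampling

variable {ι α : Type*} [Fintype ι] [DecidableEq ι] [Fintype α] {q : α → ℝ}

theorem sum_prod_mul_prod_eq_prod_sum (hq : ∑ e, q e = 1) (T : Finset ι)
    (g : ι → α → ℝ) :
    ∑ ω : ι → α, (∏ i, q (ω i)) * ∏ i ∈ T, g i (ω i) = ∏ i ∈ T, ∑ e, q e * g i e := by
  calc ∑ ω : ι → α, (∏ i, q (ω i)) * ∏ i ∈ T, g i (ω i)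
      = ∑ ω : ι → α, ∏ i, q (ω i) * (if i ∈ T then g i (ω i) else 1) := by
        refine sum_congr rfl fun ω _ => ?_
        rw [prod_mul_distrib, prod_ite_mem, univ_inter]
    _ = ∏ i, ∑ e, q e * (if i ∈ T then g i e else 1) :=
        (Fintype.prod_sum fun i e => q e * (if i ∈ T then g i e else 1)).symm
    _ = ∏ i, if i ∈ T then ∑ e, q e * g i e else 1 :=
        prod_congr rfl fun i _ => by split_ifs <;> simp [hq]
    _ = ∏ i ∈ T, ∑ e, q e * g i e := by rw [prod_ite_mem, univ_inter]

theorem sum_prod_mul_sq_sum_of_centered (hq : ∑ e, q e = 1) {h : α → ℝ}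
    (hh : ∑ e, q e * h e = 0) :
    ∑ ω : ι → α, (∏ i, q (ω i)) * (∑ i, h (ω i)) ^ 2
      = (Fintype.card ι : ℝ) * ∑ e, q e * h e ^ 2 := by
  have pair : ∀ i j, ∑ ω : ι → α, (∏ i, q (ω i)) * (h (ω i) * h (ω j))
      = if i = j then ∑ e, q e * h e ^ 2 else 0 := by
    intro i j
    split_ifs with hij
    · subst hij
      simpa [← sq] using sum_prod_mul_prod_eq_prod_sum hq {i} fun _ e => h e ^ 2
    · simpa [prod_pair hij, hh] using sum_prod_mul_prod_eq_prod_sum hq {i, j} fun _ => h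
  calc ∑ ω : ι → α, (∏ i, q (ω i)) * (∑ i, h (ω i)) ^ 2
      = ∑ i, ∑ j, ∑ ω : ι → α, (∏ i, q (ω i)) * (h (ω i) * h (ω j)) := by
        simp_rw [sq, sum_mul_sum, mul_sum]
        rw [sum_comm]
        exact sum_congr rfl fun i _ => sum_comm
    _ = (Fintype.card ι : ℝ) * ∑ e, q e * h e ^ 2 := by simp [pair]

theorem sum_prod_mul_sq_mean_sub_le [Nonempty ι] (hq : ∑ e, q e = 1) (g : α → ℝ) :
    ∑ ω : ι → α, (∏ i, q (ω i)) * ((Fintype.card ι : ℝ)⁻¹ * ∑ i, g (ω i) - ∑ e, q e * g e) ^ 2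
      ≤ (Fintype.card ι : ℝ)⁻¹ * ∑ e, q e * g e ^ 2 := by
  set n : ℝ := (Fintype.card ι : ℝ) with hn_def
  set m := ∑ e, q e * g e with hm
  have hn : n ≠ 0 := Nat.cast_ne_zero.mpr Fintype.card_ne_zero
  have hcentered : ∑ e, q e * (g e - m) = 0 := by
    simp only [mul_sub, sum_sub_distrib, ← sum_mul, hq, one_mul, ← hm, sub_self]
  have hmean : ∀ ω : ι → α, n⁻¹ * ∑ i, g (ω i) - m = n⁻¹ * ∑ i, (g (ω i) - m) := by
    intro ω
    rw [sum_sub_distrib, sum_const, card_univ, nsmul_eq_mul, ← hn_def]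
    field_simp
  have hvar : ∑ e, q e * (g e - m) ^ 2 = ∑ e, q e * g e ^ 2 - m ^ 2 := by
    have : ∀ e, q e * (g e - m) ^ 2 = q e * g e ^ 2 - 2 * m * (q e * g e) + m ^ 2 * q e :=
      fun e => by ring
    simp only [this, sum_add_distrib, sum_sub_distrib, ← mul_sum, hq, ← hm]
    ring
  calc ∑ ω : ι → α, (∏ i, q (ω i)) * (n⁻¹ * ∑ i, g (ω i) - m) ^ 2
      = n⁻¹ ^ 2 * ∑ ω : ι → α, (∏ i, q (ω i)) * (∑ i, (g (ω i) - m)) ^ 2 := by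
        rw [mul_sum]
        exact sum_congr rfl fun ω _ => by rw [hmean]; ring
    _ = n⁻¹ * (∑ e, q e * g e ^ 2 - m ^ 2) := by
        rw [sum_prod_mul_sq_sum_of_centered hq hcentered, hvar, ← hn_def]
        field_simp
    _ ≤ n⁻¹ * ∑ e, q e * g e ^ 2 :=
        mul_le_mul_of_nonneg_left (sub_le_self _ (sq_nonneg m)) (by positivity)

theorem sum_prod_mul_frobSq_mean_sub_le {m n : Type*} [Fintype m] [Fintype n] [Nonempty ι]
    (hq : ∑ e, q e = 1) (g : α → Matrix m n ℝ) :
    ∑ ω : ι → α, (∏ i, q (ω i)) *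
        frobSq ((Fintype.card ι : ℝ)⁻¹ • ∑ i, g (ω i) - ∑ e, q e • g e)
      ≤ (Fintype.card ι : ℝ)⁻¹ * ∑ e, q e * frobSq (g e) := by
  simp only [frobSq, Matrix.sub_apply, Matrix.smul_apply, Matrix.sum_apply, smul_eq_mul, mul_sum]
  rw [sum_comm]
  refine (sum_le_sum fun a _ => ?_).trans_eq sum_comm.symm
  rw [sum_comm]
  refine (sum_le_sum fun b _ => ?_).trans_eq sum_comm.symm
  simpa only [mul_sum] using sum_prod_mul_sq_mean_sub_le hq fun e => g e a b

end IndependentSampling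

theorem frobSq_single_mul {l m n : Type*} [Fintype l] [DecidableEq l] [Fintype m]
    [DecidableEq m] [Fintype n] (i : l) (j : m) (c : ℝ) (A : Matrix m n ℝ) :
    frobSq (Matrix.single i j c * A) = c ^ 2 * ∑ b, A j b ^ 2 := by
  rw [frobSq, sum_eq_single i fun a _ ha => by simp [Matrix.single_mul_apply_of_ne _ _ _ _ _ ha]]
  · simp [mul_pow, mul_sum]
  · simp

section EdgeSampling

variable {V : Type*} [DecidableEq V]

noncomputable def edgePropagation (P : Matrix V V ℝ) (p : V × V → ℝ) (e : V × V) :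
    Matrix V V ℝ :=
  Matrix.single e.1 e.2 (P e.1 e.2 / p e)

theorem of_count_div_eq_smul_sum_edgePropagation {ι : Type*} [Fintype ι] (P : Matrix V V ℝ)
    (p : V × V → ℝ) (ω : ι → V × V) :
    Matrix.of (fun v u => P v u * ((univ.filter fun i => ω i = (v, u)).card : ℝ) /
        (Fintype.card ι * p (v, u)))
      = (Fintype.card ι : ℝ)⁻¹ • ∑ i, edgePropagation P p (ω i) := by
  ext v u
  have entry : ∀ i,
      edgePropagation P p (ω i) v u = if ω i = (v, u) then P v u / p (v, u) else 0 := by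
    intro i
    rcases ω i with ⟨a, b⟩
    simp only [edgePropagation, Matrix.single_apply, Prod.mk.injEq]
    split_ifs <;> simp_all
  simp only [Matrix.of_apply, Matrix.smul_apply, Matrix.sum_apply, entry, sum_ite, sum_const_zero,
    sum_const, add_zero, nsmul_eq_mul, smul_eq_mul]
  ring

theorem sum_smul_edgePropagation [Fintype V] {P : Matrix V V ℝ} {E : Finset (V × V)}
    (hsupp : ∀ v u, (v, u) ∉ E → P v u = 0) {p : V × V → ℝ} (hp : ∀ e ∈ E, p e ≠ 0) :
    ∑ e ∈ E, p e • edgePropagation P p e = P :=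
  calc ∑ e ∈ E, p e • edgePropagation P p e
      = ∑ e ∈ E, Matrix.single e.1 e.2 (P e.1 e.2) := sum_congr rfl fun e he => by
        rw [edgePropagation, Matrix.smul_single, smul_eq_mul, mul_div_cancel₀ _ (hp e he)]
    _ = ∑ e : V × V, Matrix.single e.1 e.2 (P e.1 e.2) :=
        sum_subset (subset_univ E) fun e _ he => by rw [hsupp e.1 e.2 he, Matrix.single_zero]
    _ = P := by rw [Fintype.sum_prod_type]; exact (Matrix.matrix_eq_sum_single P).symm

theorem mul_frobSq_edgePropagation_mul_le [Fintype V] {n : Type*} [Fintype n] (P : Matrix V V ℝ)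
    {p : V × V → ℝ} {e : V × V} (hp : 0 ≤ p e) {A : Matrix V n ℝ} {ξ : ℝ}
    (hA : ∑ j, A e.2 j ^ 2 ≤ ξ ^ 2) :
    p e * frobSq (edgePropagation P p e * A) ≤ (∑ v, P v e.2 ^ 2) * ξ ^ 2 / p e := by
  have hP : P e.1 e.2 ^ 2 ≤ ∑ v, P v e.2 ^ 2 :=
    single_le_sum (fun v _ => sq_nonneg (P v e.2)) (mem_univ e.1)
  calc p e * frobSq (edgePropagation P p e * A)
      = P e.1 e.2 ^ 2 * (∑ j, A e.2 j ^ 2) / p e := by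
        rw [edgePropagation, frobSq_single_mul]
        rcases hp.eq_or_lt with h | h
        · simp [← h]
        · field_simp
    _ ≤ (∑ v, P v e.2 ^ 2) * ξ ^ 2 / p e := by
        gcongr

end EdgeSampling

/-- **Upper bound of the expected hidden embeddings' difference** (Theorem 2).
`Z = P H W` is the exact hidden embedding, where the propagation matrix `P`
is supported on the edge set `E`.  `|E_s|` edges are sampled i.i.d., edge
`(v,u)` with probability `p (v,u)`, and the importance-weighted propagation
matrix is `(P̃)_{v,u} = P_{v,u} · (#occurrences of (v,u)) / (|E_s| · p (v,u))`.
If `‖H_{u,*} W‖₂ ≤ ξ` for every node `u`, then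
`E[‖Z̃ − Z‖_F²] ≤ (1/|E_s|) ∑_{(v,u)∈E} ‖P_{*,u}‖₂² ξ² / p (v,u)`. -/
theorem expected_hidden_embedding_difference_bound
    {V : Type*} [Fintype V] [DecidableEq V] {d k : ℕ}
    (P : Matrix V V ℝ) (E : Finset (V × V))
    (hsupp : ∀ v u, (v, u) ∉ E → P v u = 0)
    (H : Matrix V (Fin d) ℝ) (W : Matrix (Fin d) (Fin k) ℝ)
    (ξ : ℝ)
    (hξ : ∀ u, Real.sqrt (∑ j, ((H * W) u j) ^ 2) ≤ ξ)
    (p : V × V → ℝ) (hp : ∀ e ∈ E, 0 < p e) (hpsum : ∑ e ∈ E, p e = 1)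
    (s : ℕ) (hs : 0 < s) :
    ∑ ω : Fin s → E, (∏ i, p (ω i : V × V)) *
        frobSq
          ((Matrix.of fun v u => P v u *
              ((univ.filter fun i : Fin s => (ω i : V × V) = (v, u)).card : ℝ) /
              (s * p (v, u))) * H * W - P * H * W)
      ≤ (1 / s) * ∑ e ∈ E, (∑ v, (P v e.2) ^ 2) * ξ ^ 2 / p e := by
  have hq : ∑ e : E, p e = 1 := by rwa [sum_coe_sort E p]
  have : Nonempty (Fin s) := Fin.pos_iff_nonempty.mp hs
  set Y : E → Matrix V (Fin k) ℝ := fun e => edgePropagation P p e * (H * W)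
  have hZ : P * H * W = ∑ e : E, p e • Y e := by
    rw [Matrix.mul_assoc, ← sum_smul_edgePropagation hsupp fun e he => (hp e he).ne',
      Matrix.sum_mul, ← sum_coe_sort E]
    simp only [Matrix.smul_mul, Y]
  have hZs : ∀ ω : Fin s → E, (Matrix.of fun v u => P v u *
      ((univ.filter fun i : Fin s => (ω i : V × V) = (v, u)).card : ℝ) / (s * p (v, u))) * H * W
        = (s : ℝ)⁻¹ • ∑ i, Y (ω i) := by
    intro ω
    have h := of_count_div_eq_smul_sum_edgePropagation P p fun i => (ω i : V × V)
    rw [Fintype.card_fin] at h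
    rw [Matrix.mul_assoc, h, Matrix.smul_mul, Matrix.sum_mul]
  calc _ = ∑ ω : Fin s → E, (∏ i, p (ω i : V × V)) *
          frobSq ((s : ℝ)⁻¹ • ∑ i, Y (ω i) - ∑ e : E, p e • Y e) := by
        simp only [hZs, hZ]
    _ ≤ (s : ℝ)⁻¹ * ∑ e : E, p e * frobSq (Y e) := by
        simpa only [Fintype.card_fin] using sum_prod_mul_frobSq_mean_sub_le (ι := Fin s) hq Y
    _ ≤ (1 / s) * ∑ e ∈ E, (∑ v, (P v e.2) ^ 2) * ξ ^ 2 / p e := by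
        rw [one_div, ← sum_coe_sort E]
        gcongr with e
        exact mul_frobSq_edgePropagation_mul_le P (hp e e.2).le
          (Real.sqrt_le_iff.mp (hξ e.1.2)).2
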